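/- arXiv:1708.03938 — 2 statements merged into one kernel-verified Lean document; each statement's English description precedes it below -/
import Mathlib

section
/- Let Λ be a finite nonzero Borel measure on [0,1] with Λ({0}) = 0 and m_{-2} := ∫_{[0,1]} x^{-2} Λ(dx) < ∞. Then there exists a nondecreasing function φ: [1,∞) → [0,∞), slowly varying at ∞, such that lim_{x→∞} φ(x) = ∞ and ∫_{(0,1]} y^{-2} φ(1/y) Λ(dy) < ∞. -/
/-!
Push the finite measure `y⁻² Λ(dy)` on `(0,1]` forward under `y ↦ 1/y` to a finite measure `ν`;
it suffices to find a slowly varying `φ ↑ ∞` with `∫ φ dν < ∞`. Choose `t n` with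
`ν [t n, ∞) ≤ 2⁻ⁿ` and `t (n+1) ≥ (t n)²`, and let `φ x = #{n | t n ≤ x}`. Then
`∫ φ dν = ∑ ν [t n, ∞) ≤ 2`. Since the ratios `t (n+1) / t n` eventually exceed any fixed `c`,
`φ (c x) - φ x` is eventually at most `1`, and as `φ → ∞` this gives slow variation.
-/

open MeasureTheory Filter Topology
open scoped ENNReal

noncomputable section

/-- `m_{-2} = ∫_{[0,1]} x^{-2} Λ(dx)`. -/
def mm2 (Λ : Measure ℝ) : ℝ≥0∞ :=
  ∫⁻ x in Set.Icc (0:ℝ) 1, ENNReal.ofReal (x⁻¹ ^ 2) ∂Λ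

open Set Asymptotics

def SlowlyVarying (φ : ℝ → ℝ) : Prop :=
  ∀ c : ℝ, 0 < c → Tendsto (fun x => φ (c * x) / φ x) atTop (𝓝 1)

theorem tendsto_div_of_abs_sub_le {α : Type*} {l : Filter α} {f g : α → ℝ} {C : ℝ}
    (hf : Tendsto f l atTop) (hgf : ∀ᶠ x in l, |g x - f x| ≤ C) :
    Tendsto (fun x => g x / f x) l (𝓝 1) := by
  have hbdd : (g - f) =O[l] fun _ => (1 : ℝ) :=
    IsBigO.of_bound C (by filter_upwards [hgf] with x hx; simpa using hx)
  have hequiv : g ~[l] f :=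
    hbdd.trans_isLittleO (isLittleO_const_left.2 (.inr (tendsto_norm_atTop_atTop.comp hf)))
  exact (isEquivalent_iff_tendsto_one (hf.eventually_ne_atTop 0)).1 hequiv

theorem SlowlyVarying.of_mul_le_add {φ : ℝ → ℝ} {C : ℝ} (hmono : Monotone φ)
    (htop : Tendsto φ atTop atTop) (hjump : ∀ c, 1 ≤ c → ∀ᶠ x in atTop, φ (c * x) ≤ φ x + C) :
    SlowlyVarying φ := by
  intro c hc
  refine tendsto_div_of_abs_sub_le (C := C) htop ?_
  rcases le_total 1 c with h1c | hc1
  · filter_upwards [hjump c h1c, eventually_ge_atTop 0] with x hjx hx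
    have : φ x ≤ φ (c * x) := hmono (le_mul_of_one_le_left hx h1c)
    rw [abs_le]; constructor <;> linarith
  · have hjump' := (tendsto_id.const_mul_atTop hc).eventually
      (hjump c⁻¹ (one_le_inv₀ hc |>.2 hc1))
    filter_upwards [hjump', eventually_ge_atTop 0] with x hjx hx
    rw [id, inv_mul_cancel_left₀ hc.ne'] at hjx
    have : φ (c * x) ≤ φ x := hmono (mul_le_of_le_one_left hx hc1)
    rw [abs_le]; constructor <;> linarith

/-- The least `n` with `x < t n`; for monotone `t` tending to `∞` this is `#{n | t n ≤ x}`. -/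
def countingFunction (t : ℕ → ℝ) (x : ℝ) : ℕ := sInf {n | x < t n}

section CountingFunction

variable {t : ℕ → ℝ}

theorem lt_apply_countingFunction (htop : Tendsto t atTop atTop) (x : ℝ) :
    x < t (countingFunction t x) :=
  Nat.sInf_mem (htop.eventually_gt_atTop x).exists

theorem lt_countingFunction_iff (hmono : Monotone t) (htop : Tendsto t atTop atTop) {n : ℕ}
    {x : ℝ} : n < countingFunction t x ↔ t n ≤ x := by
  refine ⟨fun hn => not_lt.1 (Nat.notMem_of_lt_sInf hn), fun hx => ?_⟩
  by_contra! hle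
  exact (lt_apply_countingFunction htop x).not_ge ((hmono hle).trans hx)

theorem countingFunction_mono (hmono : Monotone t) (htop : Tendsto t atTop atTop) :
    Monotone (countingFunction t) := fun _ _ hxy =>
  le_of_forall_lt fun _ hn => (lt_countingFunction_iff hmono htop).2
    (((lt_countingFunction_iff hmono htop).1 hn).trans hxy)

theorem tendsto_countingFunction (hmono : Monotone t) (htop : Tendsto t atTop atTop) :
    Tendsto (countingFunction t) atTop atTop :=
  tendsto_atTop_atTop.2 fun n => ⟨t n, fun _ hx =>
    ((lt_countingFunction_iff hmono htop).2 hx).le⟩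

theorem countingFunction_mul_le (htop : Tendsto t atTop atTop) (hsq : ∀ n, t n ^ 2 ≤ t (n + 1))
    {c x : ℝ} (hx : 0 ≤ x) (hcx : c ≤ x) :
    countingFunction t (c * x) ≤ countingFunction t x + 1 := by
  set k := countingFunction t x
  have hxk : x < t k := lt_apply_countingFunction htop x
  refine Nat.sInf_le (show c * x < t (k + 1) from ?_)
  calc c * x ≤ x * x := mul_le_mul_of_nonneg_right hcx hx
    _ < t k ^ 2 := by rw [← sq]; exact pow_lt_pow_left₀ hxk hx two_ne_zero
    _ ≤ t (k + 1) := hsq k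

theorem slowlyVarying_countingFunction (hmono : Monotone t) (htop : Tendsto t atTop atTop)
    (hsq : ∀ n, t n ^ 2 ≤ t (n + 1)) : SlowlyVarying fun x => (countingFunction t x : ℝ) := by
  refine .of_mul_le_add (C := 1) (Nat.mono_cast.comp (countingFunction_mono hmono htop))
    (tendsto_natCast_atTop_atTop.comp (tendsto_countingFunction hmono htop)) fun c _ => ?_
  filter_upwards [eventually_ge_atTop (max c 0)] with x hx
  exact_mod_cast countingFunction_mul_le htop hsq (le_of_max_le_right hx) (le_of_max_le_left hx)

theorem natCast_countingFunction_eq_tsum (hmono : Monotone t) (htop : Tendsto t atTop atTop)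
    (x : ℝ) : (countingFunction t x : ℝ≥0∞) = ∑' n, (Ici (t n)).indicator 1 x := by
  have hmem : ∀ n, x ∈ Ici (t n) ↔ n ∈ Finset.range (countingFunction t x) := fun n => by
    rw [mem_Ici, Finset.mem_range, lt_countingFunction_iff hmono htop]
  rw [tsum_eq_sum fun n hn => indicator_of_notMem (mt (hmem n).1 hn) _]
  rw [Finset.sum_congr rfl fun n hn => indicator_of_mem ((hmem n).2 hn) _]
  simp

theorem lintegral_countingFunction (hmono : Monotone t) (htop : Tendsto t atTop atTop)
    (ν : Measure ℝ) : ∫⁻ x, (countingFunction t x : ℝ≥0∞) ∂ν = ∑' n, ν (Ici (t n)) := by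
  simp_rw [natCast_countingFunction_eq_tsum hmono htop]
  rw [lintegral_tsum fun n => (measurable_one.indicator measurableSet_Ici).aemeasurable]
  simp_rw [lintegral_indicator_one measurableSet_Ici]

end CountingFunction

theorem tendsto_measure_Ici_atTop_zero (ν : Measure ℝ) [IsFiniteMeasure ν] :
    Tendsto (fun b => ν (Ici b)) atTop (𝓝 0) := by
  have hempty : ⋂ b : ℝ, Ici b = ∅ :=
    eq_empty_of_forall_notMem fun x hx => (lt_add_one x).not_ge (mem_iInter.1 hx (x + 1))
  have := tendsto_measure_iInter_atTop (μ := ν)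
    (fun _ => measurableSet_Ici.nullMeasurableSet) antitone_Ici ⟨0, measure_ne_top _ _⟩
  rwa [hempty, measure_empty] at this

theorem exists_seq_sq_le_measure_Ici_le (ν : Measure ℝ) [IsFiniteMeasure ν] :
    ∃ t : ℕ → ℝ, Monotone t ∧ Tendsto t atTop atTop ∧ (∀ n, t n ^ 2 ≤ t (n + 1)) ∧
      ∀ n, ν (Ici (t n)) ≤ 2⁻¹ ^ n := by
  have hev : ∀ n : ℕ, ∀ᶠ b in atTop, (n : ℝ) ≤ b ∧ ν (Ici b) ≤ 2⁻¹ ^ n := fun n =>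
    (eventually_ge_atTop _).and ((tendsto_measure_Ici_atTop_zero ν).eventually
      (ge_mem_nhds (ENNReal.pow_pos (by simp) n)))
  choose a ha using fun n => eventually_atTop.1 (hev n)
  let t : ℕ → ℝ := fun n => Nat.rec (a 0) (fun n tn => max (max tn (tn ^ 2)) (a (n + 1))) n
  have hat : ∀ n, a n ≤ t n := by
    rintro (_ | n)
    exacts [le_rfl, le_max_right _ _]
  exact ⟨t, monotone_nat_of_le_succ fun n => (le_max_left _ _).trans (le_max_left _ _),
    tendsto_atTop_mono (fun n => (ha n (t n) (hat n)).1) tendsto_natCast_atTop_atTop,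
    fun n => (le_max_right _ _).trans (le_max_left _ _), fun n => (ha n _ (hat n)).2⟩

theorem exists_slowlyVarying_lintegral_lt_top (ν : Measure ℝ) [IsFiniteMeasure ν] :
    ∃ φ : ℝ → ℝ, Monotone φ ∧ 0 ≤ φ ∧ SlowlyVarying φ ∧ Tendsto φ atTop atTop ∧
      ∫⁻ x, ENNReal.ofReal (φ x) ∂ν < ∞ := by
  obtain ⟨t, hmono, htop, hsq, hν⟩ := exists_seq_sq_le_measure_Ici_le ν
  refine ⟨fun x => countingFunction t x, Nat.mono_cast.comp (countingFunction_mono hmono htop),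
    fun _ => Nat.cast_nonneg _,
    slowlyVarying_countingFunction hmono htop hsq,
    tendsto_natCast_atTop_atTop.comp (tendsto_countingFunction hmono htop), ?_⟩
  calc ∫⁻ x, ENNReal.ofReal (countingFunction t x) ∂ν = ∑' n, ν (Ici (t n)) := by
        simp_rw [ENNReal.ofReal_natCast]; exact lintegral_countingFunction hmono htop ν
    _ ≤ ∑' n : ℕ, 2⁻¹ ^ n := ENNReal.tsum_le_tsum hν
    _ < ∞ := by rw [ENNReal.tsum_geometric]; simp

theorem exists_slowly_varying_integrable_against_Lambda_general
    (Λ : Measure ℝ) (hm2 : mm2 Λ < ∞) :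
    ∃ φ : ℝ → ℝ,
      MonotoneOn φ (Set.Ici 1) ∧
      (∀ x : ℝ, 1 ≤ x → 0 ≤ φ x) ∧
      (∀ c : ℝ, 0 < c → Tendsto (fun x => φ (c * x) / φ x) atTop (𝓝 1)) ∧
      Tendsto φ atTop atTop ∧
      (∫⁻ y in Set.Ioc (0:ℝ) 1, ENNReal.ofReal (y⁻¹ ^ 2 * φ y⁻¹) ∂Λ) < ∞ := by
  have hdens : Measurable fun y : ℝ => ENNReal.ofReal (y⁻¹ ^ 2) :=
    (measurable_inv.pow_const 2).ennreal_ofReal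
  set μ := (Λ.restrict (Ioc 0 1)).withDensity fun y => ENNReal.ofReal (y⁻¹ ^ 2) with hμ
  have : IsFiniteMeasure μ := ⟨by
    rw [withDensity_apply _ MeasurableSet.univ, Measure.restrict_univ]
    exact (lintegral_mono_set Ioc_subset_Icc_self).trans_lt hm2⟩
  obtain ⟨φ, hmono, hnonneg, hslow, htop, hint⟩ :=
    exists_slowlyVarying_lintegral_lt_top (μ.map (·⁻¹))
  have hφ : Measurable fun x => ENNReal.ofReal (φ x) := hmono.measurable.ennreal_ofReal
  refine ⟨φ, hmono.monotoneOn _, fun x _ => hnonneg x, hslow, htop, ?_⟩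
  calc ∫⁻ y in Ioc 0 1, ENNReal.ofReal (y⁻¹ ^ 2 * φ y⁻¹) ∂Λ
      = ∫⁻ y, ENNReal.ofReal (φ y⁻¹) ∂μ := by
        rw [hμ, lintegral_withDensity_eq_lintegral_mul _ hdens
          (g := fun y => ENNReal.ofReal (φ y⁻¹)) (hφ.comp measurable_inv)]
        simp only [Pi.mul_apply, ENNReal.ofReal_mul (sq_nonneg _)]
    _ = ∫⁻ x, ENNReal.ofReal (φ x) ∂(μ.map (·⁻¹)) := (lintegral_map hφ measurable_inv).symm
    _ < ∞ := hint

/-- **Corollary 2.3**: if `Λ` is a finite nonzero Borel measure on `[0,1]` with `Λ({0}) = 0`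
and `m_{-2} = ∫ x^{-2} Λ(dx) < ∞`, then there is a nondecreasing function
`φ : [1,∞) → [0,∞)`, slowly varying at `∞`, with `lim_{x→∞} φ(x) = ∞` and
`∫_{(0,1]} y^{-2} φ(1/y) Λ(dy) < ∞`. -/
theorem exists_slowly_varying_integrable_against_Lambda
    (Λ : Measure ℝ) [IsFiniteMeasure Λ] (hΛne : Λ ≠ 0)
    (hΛsupp : Λ (Set.Icc (0:ℝ) 1)ᶜ = 0) (hΛ0 : Λ {0} = 0)
    (hm2 : mm2 Λ < ∞) :
    ∃ φ : ℝ → ℝ,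
      MonotoneOn φ (Set.Ici 1) ∧
      (∀ x : ℝ, 1 ≤ x → 0 ≤ φ x) ∧
      (∀ c : ℝ, 0 < c → Tendsto (fun x => φ (c * x) / φ x) atTop (𝓝 1)) ∧
      Tendsto φ atTop atTop ∧
      (∫⁻ y in Set.Ioc (0:ℝ) 1, ENNReal.ofReal (y⁻¹ ^ 2 * φ y⁻¹) ∂Λ) < ∞ :=
  exists_slowly_varying_integrable_against_Lambda_general Λ hm2
end
end

section
/- Assume m_{-2} := ∫_{[0,1]} x^{-2} Λ(dx) < ∞. Then there exists a constant C > 0 such that -log p_{m,m-1} ≤ C·m for all integers m ≥ 2, where p_{m,m-1} = (∫_{[0,1]} x^{m-2} Λ(dx))/λ_m is the probability that the first collision starting from m blocks merges all m blocks. -/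
open MeasureTheory Filter Topology BoundedContinuousFunction
open scoped ENNReal NNReal

noncomputable section

/-- Collision rate `λ_{m,k} = ∫_{[0,1]} x^{k-2} (1-x)^{m-k} Λ(dx)`. -/
def lamColl (Λ : Measure ℝ) (m k : ℕ) : ℝ :=
  ∫ x in Set.Icc (0:ℝ) 1, x ^ (k - 2) * (1 - x) ^ (m - k) ∂Λ

/-- Total collision rate `λ_m = Σ_{k=2}^m C(m,k) λ_{m,k}`. -/
def lamTot (Λ : Measure ℝ) (m : ℕ) : ℝ :=
  ∑ k ∈ Finset.Icc 2 m, (m.choose k : ℝ) * lamColl Λ m k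

/-- `p_{m,k} = C(m,k+1) λ_{m,k+1} / λ_m`. -/
def pColl (Λ : Measure ℝ) (m k : ℕ) : ℝ :=
  (m.choose (k + 1) : ℝ) * lamColl Λ m (k + 1) / lamTot Λ m

/-- Adding to a spectrum the record of one collision of `j+1` blocks. -/
def addColl (j : ℕ) (x : ℕ → ℝ) : ℕ → ℝ := fun k => (if k = j + 1 then 1 else 0) + x k

/-- `μ n` is the law of the collision spectrum `(X_{n,k})_{k ≥ 2}` of the `Λ`-coalescent
started from `n` blocks, viewed as a (probability) measure on `ℕ → ℝ` whose coordinate `k`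
carries `X_{n,k}`; it is characterised by the distributional recursion obtained by
decomposing at the first collision. -/
def IsCollisionSpectrum (Λ : Measure ℝ) (μ : ℕ → Measure (ℕ → ℝ)) : Prop :=
  (∀ n, IsProbabilityMeasure (μ n)) ∧
  μ 1 = Measure.dirac (fun _ => (0:ℝ)) ∧
  ∀ n, 2 ≤ n → μ n = ∑ j ∈ Finset.Icc 1 (n - 1),
      ENNReal.ofReal (pColl Λ n j) • (μ (n - j)).map (addColl j)

/-- The law of `1 - W`, i.e. the probability measure `m_{-2}^{-1} y^{-2} Λ(dy)` on `[0,1]`. -/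
def lawY (Λ : Measure ℝ) : Measure ℝ :=
  (mm2 Λ)⁻¹ • (Λ.restrict (Set.Icc 0 1)).withDensity fun y => ENNReal.ofReal (y⁻¹ ^ 2)

/-- The law of `W`: the pushforward of `lawY Λ` under `y ↦ 1 - y`, so that
`P{W ≤ x} = m_{-2}^{-1} ∫_{[1-x,1]} y^{-2} Λ(dy)`. -/
def lawW (Λ : Measure ℝ) : Measure ℝ := (lawY Λ).map fun y => 1 - y

/-! For `ε > 0` the total-merger rate satisfies `λ_{m,m} = ∫ x^{m-2} Λ(dx) ≥ ε^{m-2} Λ[ε,1]`,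
and `Λ[ε,1] > 0` for small `ε` because `Λ` charges `(0,1]`. On the other hand every `λ_{m,k}` is
at most `Λ[0,1]`, so `λ_m ≤ 2^m Λ[0,1]`. Hence `p_{m,m-1} = λ_{m,m}/λ_m` is bounded below by a
geometric sequence `a (ε/2)^m`, and `-log p_{m,m-1}` grows at most linearly. -/

open Set

section MeasureOnReal

variable {μ : Measure ℝ} {a b : ℝ}

theorem measure_Ioc_ne_zero_of_ne_zero (hμ : μ ≠ 0) (hsupp : μ (Icc a b)ᶜ = 0) (ha : μ {a} = 0) :
    μ (Ioc a b) ≠ 0 := by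
  intro hIoc
  have hcover : univ ⊆ (Icc a b)ᶜ ∪ ({a} ∪ Ioc a b) := by
    intro x _
    by_cases hx : x ∈ Icc a b
    · exact Or.inr ((eq_or_lt_of_le hx.1).imp Eq.symm fun h => ⟨h, hx.2⟩)
    · exact Or.inl hx
  exact hμ (Measure.measure_univ_eq_zero.mp
    (measure_mono_null hcover (measure_union_null hsupp (measure_union_null ha hIoc))))

theorem exists_lt_measure_Icc_ne_zero (h : μ (Ioc a b) ≠ 0) : ∃ c, a < c ∧ μ (Icc c b) ≠ 0 := by
  by_contra! hnull
  have hcover : Ioc a b ⊆ ⋃ n : ℕ, Icc (a + 1 / (n + 1)) b := by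
    intro x hx
    obtain ⟨n, hn⟩ := exists_nat_one_div_lt (sub_pos.mpr hx.1)
    exact mem_iUnion.mpr ⟨n, by linarith, hx.2⟩
  exact h (measure_mono_null hcover (measure_iUnion_null fun n => hnull _ (lt_add_of_pos_right a (by positivity))))

end MeasureOnReal

section CollisionRates

variable (Λ : Measure ℝ) (m k : ℕ)

theorem lamColl_nonneg : 0 ≤ lamColl Λ m k :=
  setIntegral_nonneg measurableSet_Icc fun _ hx =>
    mul_nonneg (pow_nonneg hx.1 _) (pow_nonneg (sub_nonneg.mpr hx.2) _)

theorem lamColl_self : lamColl Λ m m = ∫ x in Icc (0:ℝ) 1, x ^ (m - 2) ∂Λ := by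
  simp [lamColl]

theorem lamColl_le_measureReal [IsFiniteMeasure Λ] : lamColl Λ m k ≤ Λ.real (Icc 0 1) := by
  have hint : IntegrableOn (fun x : ℝ => x ^ (k - 2) * (1 - x) ^ (m - k)) (Icc 0 1) Λ :=
    (by fun_prop : Continuous fun x : ℝ => x ^ (k - 2) * (1 - x) ^ (m - k)).continuousOn
      |>.integrableOn_compact isCompact_Icc
  calc lamColl Λ m k ≤ ∫ _ in Icc (0:ℝ) 1, (1:ℝ) ∂Λ :=
        setIntegral_mono_on hint (integrableOn_const (measure_ne_top _ _)) measurableSet_Icc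
          fun x hx => mul_le_one₀ (pow_le_one₀ hx.1 hx.2) (pow_nonneg (sub_nonneg.mpr hx.2) _)
            (pow_le_one₀ (sub_nonneg.mpr hx.2) (by linarith [hx.1]))
    _ = Λ.real (Icc 0 1) := by simp

theorem pow_mul_measureReal_le_lamColl_self [IsFiniteMeasure Λ] {ε : ℝ} (hε : 0 ≤ ε) :
    ε ^ (m - 2) * Λ.real (Icc ε 1) ≤ lamColl Λ m m := by
  have hint : IntegrableOn (fun x : ℝ => x ^ (m - 2)) (Icc 0 1) Λ :=
    (continuous_pow _).continuousOn.integrableOn_compact isCompact_Icc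
  calc ε ^ (m - 2) * Λ.real (Icc ε 1) = ∫ _ in Icc ε 1, ε ^ (m - 2) ∂Λ := by
        rw [setIntegral_const, smul_eq_mul, mul_comm]
    _ ≤ ∫ x in Icc ε 1, x ^ (m - 2) ∂Λ :=
        setIntegral_mono_on (integrableOn_const (measure_ne_top _ _))
          (hint.mono_set (Icc_subset_Icc_left hε)) measurableSet_Icc
          fun x hx => pow_le_pow_left₀ hε hx.1 _
    _ ≤ ∫ x in Icc 0 1, x ^ (m - 2) ∂Λ :=
        setIntegral_mono_set hint
          ((ae_restrict_mem measurableSet_Icc).mono fun x hx => pow_nonneg hx.1 _)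
          (Icc_subset_Icc_left hε).eventuallyLE
    _ = lamColl Λ m m := (lamColl_self Λ m).symm

theorem lamTot_le [IsFiniteMeasure Λ] : lamTot Λ m ≤ 2 ^ m * Λ.real (Icc 0 1) := by
  have hchoose : ∑ k ∈ Finset.Icc 2 m, (m.choose k : ℝ) ≤ 2 ^ m := by
    have : ∑ k ∈ Finset.Icc 2 m, m.choose k ≤ ∑ k ∈ Finset.range (m + 1), m.choose k :=
      Finset.sum_le_sum_of_subset fun k hk => by
        simp only [Finset.mem_Icc, Finset.mem_range] at hk ⊢; omega
    rw [Nat.sum_range_choose] at this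
    exact_mod_cast this
  calc lamTot Λ m ≤ ∑ k ∈ Finset.Icc 2 m, (m.choose k : ℝ) * Λ.real (Icc 0 1) :=
        Finset.sum_le_sum fun k _ =>
          mul_le_mul_of_nonneg_left (lamColl_le_measureReal Λ m k) (Nat.cast_nonneg _)
    _ ≤ 2 ^ m * Λ.real (Icc 0 1) := by
        rw [← Finset.sum_mul]; exact mul_le_mul_of_nonneg_right hchoose measureReal_nonneg

variable {m} in
theorem lamColl_self_le_lamTot (hm : 2 ≤ m) : lamColl Λ m m ≤ lamTot Λ m := by
  simpa [lamTot] using Finset.single_le_sum (f := fun k => (m.choose k : ℝ) * lamColl Λ m k)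
    (fun k _ => mul_nonneg (Nat.cast_nonneg _) (lamColl_nonneg Λ m k))
    (Finset.mem_Icc.mpr ⟨hm, le_rfl⟩)

variable {m} in
theorem pColl_pred_self (hm : 1 ≤ m) : pColl Λ m (m - 1) = lamColl Λ m m / lamTot Λ m := by
  simp [pColl, Nat.sub_add_cancel hm]

variable {Λ m} in
theorem mul_pow_le_pColl_pred_self [IsFiniteMeasure Λ] {ε : ℝ} (hε0 : 0 < ε) (hε1 : ε ≤ 1)
    (hm : 2 ≤ m) (hc : 0 < Λ.real (Icc ε 1)) :
    Λ.real (Icc ε 1) / Λ.real (Icc 0 1) * (ε / 2) ^ m ≤ pColl Λ m (m - 1) := by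
  have hnum : ε ^ m * Λ.real (Icc ε 1) ≤ lamColl Λ m m :=
    (mul_le_mul_of_nonneg_right (pow_le_pow_of_le_one hε0.le hε1 (Nat.sub_le m 2)) hc.le).trans
      (pow_mul_measureReal_le_lamColl_self Λ m hε0.le)
  have htot : 0 < lamTot Λ m :=
    (mul_pos (pow_pos hε0 m) hc).trans_le (hnum.trans (lamColl_self_le_lamTot Λ hm))
  calc Λ.real (Icc ε 1) / Λ.real (Icc 0 1) * (ε / 2) ^ m
      = ε ^ m * Λ.real (Icc ε 1) / (2 ^ m * Λ.real (Icc 0 1)) := by rw [div_pow]; ring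
    _ ≤ lamColl Λ m m / lamTot Λ m :=
        div_le_div₀ (lamColl_nonneg Λ m m) hnum htot (lamTot_le Λ m)
    _ = pColl Λ m (m - 1) := (pColl_pred_self Λ (by omega)).symm

end CollisionRates

theorem neg_log_le_mul_of_mul_pow_le {a b x : ℝ} {m : ℕ} (ha : 0 < a) (hb : 0 < b) (hm : 1 ≤ m)
    (h : a * b ^ m ≤ x) : -Real.log x ≤ (|Real.log a| + |Real.log b|) * m := by
  have hlog : Real.log a + m * Real.log b ≤ Real.log x := by
    rw [← Real.log_pow, ← Real.log_mul ha.ne' (pow_pos hb m).ne']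
    exact Real.log_le_log (by positivity) h
  have hm' : (1 : ℝ) ≤ m := by exact_mod_cast hm
  nlinarith [neg_abs_le (Real.log a), neg_abs_le (Real.log b), abs_nonneg (Real.log a)]

theorem neg_log_p_total_merger_le_linear_general
    (Λ : Measure ℝ) [IsFiniteMeasure Λ] (hΛne : Λ ≠ 0)
    (hΛsupp : Λ (Set.Icc (0:ℝ) 1)ᶜ = 0) (hΛ0 : Λ {0} = 0) :
    ∃ C : ℝ, 0 < C ∧ ∀ m : ℕ, 2 ≤ m → -Real.log (pColl Λ m (m - 1)) ≤ C * m := by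
  obtain ⟨ε, hε0, hε⟩ :=
    exists_lt_measure_Icc_ne_zero (measure_Ioc_ne_zero_of_ne_zero hΛne hΛsupp hΛ0)
  have hε1 : ε ≤ 1 := nonempty_Icc.mp (nonempty_of_measure_ne_zero hε)
  have hc : 0 < Λ.real (Icc ε 1) := ENNReal.toReal_pos hε (measure_ne_top _ _)
  set a := Λ.real (Icc ε 1) / Λ.real (Icc 0 1)
  have ha : 0 < a := div_pos hc (hc.trans_le (measureReal_mono (Icc_subset_Icc_left hε0.le)))
  refine ⟨|Real.log a| + |Real.log (ε / 2)| + 1, by positivity, fun m hm => ?_⟩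
  calc -Real.log (pColl Λ m (m - 1)) ≤ (|Real.log a| + |Real.log (ε / 2)|) * m :=
        neg_log_le_mul_of_mul_pow_le ha (half_pos hε0) (by omega)
          (mul_pow_le_pColl_pred_self hε0 hε1 hm hc)
    _ ≤ (|Real.log a| + |Real.log (ε / 2)| + 1) * m :=
        mul_le_mul_of_nonneg_right (le_add_of_nonneg_right zero_le_one) m.cast_nonneg

/-- **(From the proof of Theorem 1.1)**: assume `m_{-2} < ∞`. Then there is a constant
`C > 0` with `-log p_{m,m-1} ≤ C·m` for all `m ≥ 2`, where `p_{m,m-1}` is the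
probability that the first collision starting from `m` blocks merges all `m` blocks. -/
theorem neg_log_p_total_merger_le_linear
    (Λ : Measure ℝ) [IsFiniteMeasure Λ] (hΛne : Λ ≠ 0)
    (hΛsupp : Λ (Set.Icc (0:ℝ) 1)ᶜ = 0) (hΛ0 : Λ {0} = 0) (hΛ1 : Λ {1} = 0)
    (hm2 : mm2 Λ < ∞) :
    ∃ C : ℝ, 0 < C ∧ ∀ m : ℕ, 2 ≤ m → -Real.log (pColl Λ m (m - 1)) ≤ C * m :=
  neg_log_p_total_merger_le_linear_general Λ hΛne hΛsupp hΛ0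
end
end
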